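/- arXiv:math/0306251 — 8 statements merged into one kernel-verified Lean document; each statement's English description precedes it below -/
import Mathlib

section
/- Let x and θ be positive real numbers with θ irrational. Then ∑_{1 ≤ m ≤ x} ⌊mθ⌋ + ∑_{1 ≤ n ≤ θx} ⌊n/θ⌋ = ⌊x⌋ · ⌊θx⌋. -/
open Finset

theorem sylvester_irrational (x θ : ℝ) (hx : 0 < x) (hθ : 0 < θ) (hirr : Irrational θ) :
    ∑ m ∈ Finset.Icc 1 ⌊x⌋₊, ⌊(m : ℝ) * θ⌋ + ∑ n ∈ Finset.Icc 1 ⌊θ * x⌋₊, ⌊(n : ℝ) / θ⌋ =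
      ⌊x⌋ * ⌊θ * x⌋ := by
  set a := ⌊x⌋₊ with ha
  set b := ⌊θ * x⌋₊ with hb
  -- mθ is never a natural number for m ≥ 1
  have hne : ∀ m n : ℕ, 1 ≤ m → (m : ℝ) * θ ≠ n := by
    intro m n hm h
    apply hirr
    refine ⟨(n : ℚ) / (m : ℚ), ?_⟩
    have hm0 : (m : ℝ) ≠ 0 := by positivity
    push_cast
    field_simp
    linarith [h]
  -- Step 1: each ⌊mθ⌋₊ counts lattice points in a column
  have key1 : ∀ m ∈ Icc 1 a,
      ⌊(m : ℝ) * θ⌋₊ = ((Icc 1 b).filter (fun n : ℕ => (n : ℝ) < m * θ)).card := by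
    intro m hm
    simp only [mem_Icc] at hm
    have hmx : (m : ℝ) ≤ x := le_trans (by exact_mod_cast hm.2) (Nat.floor_le hx.le)
    have hle : ⌊(m : ℝ) * θ⌋₊ ≤ b := by
      apply Nat.floor_le_floor
      calc (m : ℝ) * θ ≤ x * θ := by nlinarith
        _ = θ * x := by ring
    have : (Icc 1 b).filter (fun n : ℕ => (n : ℝ) < m * θ) = Icc 1 ⌊(m : ℝ) * θ⌋₊ := by
      ext n
      simp only [mem_filter, mem_Icc]
      constructor
      · rintro ⟨⟨h1, _⟩, h3⟩
        exact ⟨h1, Nat.le_floor h3.le⟩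
      · rintro ⟨h1, h2⟩
        have hnle : (n : ℝ) ≤ (m : ℝ) * θ := by
          calc (n : ℝ) ≤ (⌊(m : ℝ) * θ⌋₊ : ℝ) := by exact_mod_cast h2
            _ ≤ (m : ℝ) * θ := Nat.floor_le (by positivity)
        exact ⟨⟨h1, le_trans h2 hle⟩, lt_of_le_of_ne hnle (fun h => hne m n hm.1 h.symm)⟩
    rw [this, Nat.card_Icc]
    simp
  -- Step 2: each ⌊n/θ⌋₊ counts lattice points in a row
  have key2 : ∀ n ∈ Icc 1 b,
      ⌊(n : ℝ) / θ⌋₊ = ((Icc 1 a).filter (fun m : ℕ => (m : ℝ) * θ < n)).card := by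
    intro n hn
    simp only [mem_Icc] at hn
    have hnx : (n : ℝ) ≤ θ * x := le_trans (by exact_mod_cast hn.2) (Nat.floor_le (by positivity))
    have hle : ⌊(n : ℝ) / θ⌋₊ ≤ a := by
      apply Nat.floor_le_floor
      rw [div_le_iff₀ hθ]
      linarith
    have : (Icc 1 a).filter (fun m : ℕ => (m : ℝ) * θ < n) = Icc 1 ⌊(n : ℝ) / θ⌋₊ := by
      ext m
      simp only [mem_filter, mem_Icc]
      constructor
      · rintro ⟨⟨h1, _⟩, h3⟩
        refine ⟨h1, Nat.le_floor ?_⟩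
        rw [le_div_iff₀ hθ]
        linarith
      · rintro ⟨h1, h2⟩
        have hmle : (m : ℝ) ≤ (n : ℝ) / θ := by
          calc (m : ℝ) ≤ (⌊(n : ℝ) / θ⌋₊ : ℝ) := by exact_mod_cast h2
            _ ≤ (n : ℝ) / θ := Nat.floor_le (by positivity)
        have : (m : ℝ) * θ ≤ n := by
          rw [← le_div_iff₀ hθ]; exact hmle
        exact ⟨⟨h1, le_trans h2 hle⟩, lt_of_le_of_ne this (hne m n h1)⟩
    rw [this, Nat.card_Icc]
    simp
  -- combinatorial identity in ℕ
  have main : ∑ m ∈ Icc 1 a, ⌊(m : ℝ) * θ⌋₊ + ∑ n ∈ Icc 1 b, ⌊(n : ℝ) / θ⌋₊ = a * b := by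
    rw [Finset.sum_congr rfl key1, Finset.sum_congr rfl key2]
    have e1 : ∑ m ∈ Icc 1 a, ((Icc 1 b).filter (fun n : ℕ => (n : ℝ) < m * θ)).card
        = ((Icc 1 a ×ˢ Icc 1 b).filter (fun p : ℕ × ℕ => (p.2 : ℝ) < p.1 * θ)).card := by
      rw [Finset.card_filter (fun p : ℕ × ℕ => (p.2 : ℝ) < p.1 * θ), Finset.sum_product]
      exact Finset.sum_congr rfl fun m _ => Finset.card_filter _ _
    have e2 : ∑ n ∈ Icc 1 b, ((Icc 1 a).filter (fun m : ℕ => (m : ℝ) * θ < n)).card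
        = ((Icc 1 a ×ˢ Icc 1 b).filter (fun p : ℕ × ℕ => ¬ ((p.2 : ℝ) < p.1 * θ))).card := by
      have hiff : ∀ p ∈ Icc 1 a ×ˢ Icc 1 b,
          (¬ ((p.2 : ℝ) < p.1 * θ)) ↔ ((p.1 : ℝ) * θ < p.2) := by
        rintro ⟨m, n⟩ hp
        simp only [Finset.mem_product, mem_Icc] at hp
        constructor
        · intro h
          exact lt_of_le_of_ne (not_lt.mp h) (hne m n hp.1.1)
        · intro h
          exact not_lt.mpr h.le
      rw [Finset.filter_congr hiff,
        Finset.card_filter (fun p : ℕ × ℕ => (p.1 : ℝ) * θ < p.2), Finset.sum_product,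
        Finset.sum_comm]
      exact Finset.sum_congr rfl fun n _ => Finset.card_filter _ _
    rw [e1, e2, Finset.card_filter_add_card_filter_not, Finset.card_product,
      Nat.card_Icc, Nat.card_Icc]
    simp
  -- now cast to ℤ
  have c1 : ∀ m ∈ Icc 1 a, ⌊(m : ℝ) * θ⌋ = (⌊(m : ℝ) * θ⌋₊ : ℤ) :=
    fun m _ => (Int.natCast_floor_eq_floor (by positivity)).symm
  have c2 : ∀ n ∈ Icc 1 b, ⌊(n : ℝ) / θ⌋ = (⌊(n : ℝ) / θ⌋₊ : ℤ) :=
    fun n _ => (Int.natCast_floor_eq_floor (by positivity)).symm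
  rw [Finset.sum_congr rfl c1, Finset.sum_congr rfl c2,
    ← Int.natCast_floor_eq_floor hx.le, ← Int.natCast_floor_eq_floor (by positivity : (0:ℝ) ≤ θ * x)]
  exact_mod_cast congrArg (Nat.cast : ℕ → ℤ) main
end

section
/- Let x and θ be positive real numbers and θ = p/q with p, q positive coprime integers. Then ∑_{1 ≤ m ≤ x} ⌊mθ⌋ + ∑_{1 ≤ n ≤ θx} ⌊n/θ⌋ = ⌊x⌋ · ⌊θx⌋ + ⌊x/q⌋. -/
/-!
Both sums count lattice points `(m, n) ∈ [1, ⌊x⌋] × [1, ⌊θx⌋]`: the first those with `n ≤ mθ`,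
the second those with `mθ ≤ n`. Together they cover the rectangle, counting twice exactly the
points on the line `n = mθ`. As `gcd(p, q) = 1`, these are the points with `q ∣ m`, and there are
`⌊x⌋ / q = ⌊x / q⌋` of them.
-/

open Finset

lemma Finset.card_filter_le_add_card_filter_ge {α β : Type*} [LinearOrder β] (s : Finset α)
    (f : α → β) (b : β) :
    #{x ∈ s | f x ≤ b} + #{x ∈ s | b ≤ f x} = #s + #{x ∈ s | f x = b} := by
  classical
  rw [← card_union_add_card_inter, ← filter_or, ← filter_and]
  congr 2
  · exact filter_true_of_mem fun x _ => le_total _ _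
  · exact filter_congr fun x _ => le_antisymm_iff.symm

lemma Nat.card_filter_Icc_natCast_le {R : Type*} [Semiring R] [LinearOrder R]
    [IsStrictOrderedRing R] [FloorSemiring R] {a : R} {N : ℕ} (ha : a < N + 1) :
    #{n ∈ Icc 1 N | ((n : ℕ) : R) ≤ a} = ⌊a⌋₊ := by
  have hfloor : ⌊a⌋₊ ≤ N :=
    Nat.lt_succ_iff.mp ((Nat.floor_lt' N.succ_ne_zero).mpr (by exact_mod_cast ha))
  have hset : {n ∈ Icc 1 N | ((n : ℕ) : R) ≤ a} = Icc 1 ⌊a⌋₊ := by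
    ext n
    simp only [mem_filter, mem_Icc]
    constructor
    · rintro ⟨⟨hn, -⟩, hna⟩
      exact ⟨hn, (Nat.le_floor_iff' (by omega)).mpr hna⟩
    · rintro ⟨hn, hna⟩
      exact ⟨⟨hn, hna.trans hfloor⟩, (Nat.le_floor_iff' (by omega)).mp hna⟩
  rw [hset, Nat.card_Icc, Nat.add_sub_cancel]

lemma Nat.card_filter_Icc_mul_eq_mul {p q m N : ℕ} (hpq : p.Coprime q) (hp : 0 < p) (hm : 0 < m)
    (hN : m * p < (N + 1) * q) :
    #{n ∈ Icc 1 N | n * q = m * p} = if q ∣ m then 1 else 0 := by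
  split_ifs with hqm
  · obtain ⟨k, rfl⟩ := hqm
    have hq : 0 < q := Nat.pos_of_mul_pos_right hm
    rw [Finset.card_eq_one]
    refine ⟨k * p, ?_⟩
    ext n
    simp only [mem_filter, mem_Icc, mem_singleton]
    have hk : 0 < k := Nat.pos_of_mul_pos_left hm
    have hkp : k * p ≤ N := by nlinarith
    constructor
    · rintro ⟨-, hn⟩
      exact Nat.eq_of_mul_eq_mul_right hq (by rw [hn]; ring)
    · rintro rfl
      exact ⟨⟨Nat.mul_pos hk hp, hkp⟩, by ring⟩
  · rw [Finset.card_eq_zero, filter_eq_empty_iff]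
    intro n _ hn
    exact hqm (hpq.symm.dvd_of_dvd_mul_right ⟨n, by rw [← hn, mul_comm]⟩)

lemma Nat.sum_card_filter_Icc_mul_eq_mul {p q M N : ℕ} (hpq : p.Coprime q) (hp : 0 < p)
    (hN : M * p < (N + 1) * q) :
    ∑ m ∈ Icc 1 M, #{n ∈ Icc 1 N | n * q = m * p} = M / q := by
  rw [sum_congr rfl fun m hm => Nat.card_filter_Icc_mul_eq_mul hpq hp (mem_Icc.mp hm).1
    ((Nat.mul_le_mul_right p (mem_Icc.mp hm).2).trans_lt hN), sum_boole, Nat.cast_id,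
    ← Nat.Ioc_filter_dvd_card_eq_div]
  rfl

lemma sum_floor_mul_add_sum_floor_div {θ : ℝ} (hθ : 0 < θ) {M N : ℕ} (hM : M * θ < N + 1)
    (hN : N / θ < M + 1) :
    ∑ m ∈ Icc 1 M, ⌊(m : ℝ) * θ⌋₊ + ∑ n ∈ Icc 1 N, ⌊(n : ℝ) / θ⌋₊ =
      M * N + ∑ m ∈ Icc 1 M, #{n ∈ Icc 1 N | ((n : ℕ) : ℝ) = m * θ} := by
  have hfloor_mul : ∀ m ∈ Icc 1 M, ⌊(m : ℝ) * θ⌋₊ = #{n ∈ Icc 1 N | ((n : ℕ) : ℝ) ≤ m * θ} :=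
    fun m hm => (Nat.card_filter_Icc_natCast_le (lt_of_le_of_lt
      (by gcongr; exact_mod_cast (mem_Icc.mp hm).2) hM)).symm
  have hfloor_div : ∀ n ∈ Icc 1 N, ⌊(n : ℝ) / θ⌋₊ = #{m ∈ Icc 1 M | ((m : ℕ) : ℝ) * θ ≤ n} := by
    intro n hn
    simp_rw [← le_div_iff₀ hθ]
    exact (Nat.card_filter_Icc_natCast_le (lt_of_le_of_lt
      (by gcongr; exact_mod_cast (mem_Icc.mp hn).2) hN)).symm
  have hswap : ∑ n ∈ Icc 1 N, #{m ∈ Icc 1 M | ((m : ℕ) : ℝ) * θ ≤ n} =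
      ∑ m ∈ Icc 1 M, #{n ∈ Icc 1 N | (m : ℝ) * θ ≤ (n : ℕ)} := by
    simp only [card_filter]
    exact sum_comm
  rw [sum_congr rfl hfloor_mul, sum_congr rfl hfloor_div, hswap, ← sum_add_distrib,
    sum_congr rfl fun m _ => card_filter_le_add_card_filter_ge _ _ _, sum_add_distrib, sum_const,
    smul_eq_mul]
  simp only [Nat.card_Icc, Nat.add_sub_cancel]

theorem sylvester_rational (x : ℝ) (hx : 0 < x) (p q : ℕ) (hp : 0 < p) (hq : 0 < q)
    (hcop : Nat.Coprime p q) (θ : ℝ) (hθ : θ = (p : ℝ) / q) :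
    ∑ m ∈ Finset.Icc 1 ⌊x⌋₊, ⌊(m : ℝ) * θ⌋ + ∑ n ∈ Finset.Icc 1 ⌊θ * x⌋₊, ⌊(n : ℝ) / θ⌋ =
      ⌊x⌋ * ⌊θ * x⌋ + ⌊x / q⌋ := by
  have hq' : (0 : ℝ) < q := by exact_mod_cast hq
  have hθ0 : 0 < θ := hθ ▸ by positivity
  set M := ⌊x⌋₊
  set N := ⌊θ * x⌋₊
  have hM : (M : ℝ) * θ < N + 1 := calc
    (M : ℝ) * θ ≤ θ * x := by rw [mul_comm]; gcongr; exact Nat.floor_le hx.le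
    _ < N + 1 := Nat.lt_floor_add_one _
  have hN : (N : ℝ) / θ < M + 1 := calc
    (N : ℝ) / θ ≤ x := (div_le_iff₀' hθ0).mpr (Nat.floor_le (by positivity))
    _ < M + 1 := Nat.lt_floor_add_one _
  have hdiag : ∀ m n : ℕ, (n : ℝ) = m * θ ↔ n * q = m * p := fun m n => by
    rw [hθ, mul_div_assoc', eq_div_iff hq'.ne']
    norm_cast
  have hcount := sum_floor_mul_add_sum_floor_div hθ0 hM hN
  simp only [hdiag] at hcount
  have hMN : M * p < (N + 1) * q := by
    rw [hθ, mul_div_assoc', div_lt_iff₀ hq'] at hM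
    exact_mod_cast hM
  rw [Nat.sum_card_filter_Icc_mul_eq_mul hcop hp hMN] at hcount
  rw [Int.floor_div_natCast, ← Int.natCast_floor_eq_floor hx.le,
    ← Int.natCast_floor_eq_floor (by positivity : 0 ≤ θ * x),
    sum_congr rfl fun m _ => (Int.natCast_floor_eq_floor (by positivity)).symm,
    sum_congr rfl fun n _ => (Int.natCast_floor_eq_floor (by positivity)).symm]
  exact_mod_cast hcount
end

section
/- Let θ and x be positive real numbers with θ irrational, and let f be defined on integers 0 ≤ n ≤ θx and g on integers 0 ≤ m ≤ x, with f(0) = g(0) = 0. Then ∑_{1 ≤ m ≤ x} f(⌊mθ⌋)(g(m) − g(m−1)) + ∑_{1 ≤ n ≤ θx} g(⌊n/θ⌋)(f(n) − f(n−1)) = f(⌊θx⌋) g(⌊x⌋). -/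
lemma tele_aux (f : ℕ → ℂ) (hf0 : f 0 = 0) (K : ℕ) :
    ∑ n ∈ Finset.Icc 1 K, (f n - f (n - 1)) = f K := by
  induction K with
  | zero => simp [hf0]
  | succ K ih =>
      rw [Finset.sum_Icc_succ_top (by omega)]
      simp [ih]

lemma cut_aux (f : ℕ → ℂ) (hf0 : f 0 = 0) (K N : ℕ) (hKN : K ≤ N) :
    ∑ n ∈ Finset.Icc 1 N, (if n ≤ K then f n - f (n - 1) else 0) = f K := by
  rw [← Finset.sum_filter]
  have : (Finset.Icc 1 N).filter (· ≤ K) = Finset.Icc 1 K := by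
    ext a; simp; omega
  rw [this, tele_aux f hf0]

theorem hardy_littlewood_summation (θ x : ℝ) (hθ : 0 < θ) (hx : 0 < x)
    (hirr : Irrational θ) (f g : ℕ → ℂ) (hf0 : f 0 = 0) (hg0 : g 0 = 0) :
    ∑ m ∈ Finset.Icc 1 ⌊x⌋₊, f ⌊(m : ℝ) * θ⌋₊ * (g m - g (m - 1)) +
      ∑ n ∈ Finset.Icc 1 ⌊θ * x⌋₊, g ⌊(n : ℝ) / θ⌋₊ * (f n - f (n - 1)) =
      f ⌊θ * x⌋₊ * g ⌊x⌋₊ := by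
  set M := ⌊x⌋₊ with hM
  set N := ⌊θ * x⌋₊ with hN
  have h1 : ∀ m ∈ Finset.Icc 1 M, f ⌊(m : ℝ) * θ⌋₊ =
      ∑ n ∈ Finset.Icc 1 N, (if (n : ℝ) ≤ m * θ then f n - f (n - 1) else 0) := by
    intro m hm
    obtain ⟨hm1, hmM⟩ := Finset.mem_Icc.mp hm
    have hmθ0 : (0:ℝ) ≤ (m : ℝ) * θ := by positivity
    have hmx : (m : ℝ) ≤ x := le_trans (by exact_mod_cast hmM) (Nat.floor_le hx.le)
    have hle : ⌊(m : ℝ) * θ⌋₊ ≤ N := by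
      apply Nat.floor_le_floor
      nlinarith
    rw [← cut_aux f hf0 _ N hle]
    refine Finset.sum_congr rfl fun n _ => ?_
    simp only [Nat.le_floor_iff hmθ0]
  have h2 : ∀ n ∈ Finset.Icc 1 N, g ⌊(n : ℝ) / θ⌋₊ =
      ∑ m ∈ Finset.Icc 1 M, (if (m : ℝ) ≤ n / θ then g m - g (m - 1) else 0) := by
    intro n hn
    obtain ⟨hn1, hnN⟩ := Finset.mem_Icc.mp hn
    have hnθ0 : (0:ℝ) ≤ (n : ℝ) / θ := by positivity
    have hnx : (n : ℝ) ≤ θ * x := le_trans (by exact_mod_cast hnN) (Nat.floor_le (by positivity))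
    have hle : ⌊(n : ℝ) / θ⌋₊ ≤ M := by
      apply Nat.floor_le_floor
      rw [div_le_iff₀ hθ]
      nlinarith
    rw [← cut_aux g hg0 _ M hle]
    refine Finset.sum_congr rfl fun m _ => ?_
    simp only [Nat.le_floor_iff hnθ0]
  calc ∑ m ∈ Finset.Icc 1 M, f ⌊(m : ℝ) * θ⌋₊ * (g m - g (m - 1)) +
        ∑ n ∈ Finset.Icc 1 N, g ⌊(n : ℝ) / θ⌋₊ * (f n - f (n - 1))
      = ∑ m ∈ Finset.Icc 1 M, ∑ n ∈ Finset.Icc 1 N,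
          ((if (n : ℝ) ≤ m * θ then f n - f (n - 1) else 0) * (g m - g (m - 1)) +
           (if (m : ℝ) ≤ n / θ then g m - g (m - 1) else 0) * (f n - f (n - 1))) := by
        simp only [Finset.sum_add_distrib]
        congr 1
        · exact Finset.sum_congr rfl fun m hm => by rw [h1 m hm, Finset.sum_mul]
        · rw [Finset.sum_comm]
          exact Finset.sum_congr rfl fun n hn => by rw [h2 n hn, Finset.sum_mul]
    _ = ∑ m ∈ Finset.Icc 1 M, ∑ n ∈ Finset.Icc 1 N,
          ((f n - f (n - 1)) * (g m - g (m - 1))) := by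
        refine Finset.sum_congr rfl fun m hm => Finset.sum_congr rfl fun n hn => ?_
        obtain ⟨hm1, _⟩ := Finset.mem_Icc.mp hm
        obtain ⟨hn1, _⟩ := Finset.mem_Icc.mp hn
        have hne : (m : ℝ) * θ ≠ (n : ℝ) := by
          intro h
          apply hirr
          refine ⟨(n : ℚ) / (m : ℚ), ?_⟩
          have hm0 : (m : ℝ) ≠ 0 := by positivity
          push_cast
          field_simp
          linarith [h]
        have hiff : (m : ℝ) ≤ (n : ℝ) / θ ↔ (m : ℝ) * θ ≤ n := le_div_iff₀ hθ
        by_cases hc : (n : ℝ) ≤ (m : ℝ) * θ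
        · have hc2 : ¬ ((m : ℝ) ≤ (n : ℝ) / θ) := by
            rw [hiff]
            intro h
            exact hne (le_antisymm h hc)
          simp [hc, hc2]
        · have hc2 : (m : ℝ) ≤ (n : ℝ) / θ := by
            rw [hiff]; linarith [lt_of_not_ge hc]
          simp [hc, hc2]; ring
    _ = f N * g M := by
        rw [← tele_aux f hf0 N, ← tele_aux g hg0 M, Finset.sum_mul_sum]
        rw [Finset.sum_comm]
end

section
/- For all positive real numbers x and θ, ∑_{1 ≤ n ≤ θx} B₁(n/θ) + ∑_{1 ≤ m ≤ x} B₁(mθ) = (1/(2θ))({θx} − θ{x})² + ((θ−1)/(2θ))({θx} − θ{x}). -/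
open Classical in
/-- The first Bernoulli function. -/
noncomputable def B1 (y : ℝ) : ℝ := if ∃ n : ℤ, y = n then 0 else Int.fract y - 1 / 2

open Finset

private lemma gaussR (N : ℕ) : ∑ n ∈ Icc 1 N, (n : ℝ) = N * (N + 1) / 2 := by
  induction N with
  | zero => simp
  | succ k ih =>
    rw [Finset.sum_Icc_succ_top (by omega)]
    push_cast
    rw [ih]; ring

open Classical in
private lemma B1_eq (y : ℝ) (hy : 0 ≤ y) :
    B1 y = y - (⌊y⌋₊ : ℝ) - 1/2 + (if ∃ n : ℤ, y = n then (1:ℝ) else 0)/2 := by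
  unfold B1
  split_ifs with h
  · obtain ⟨n, hn⟩ := h
    have hn0 : 0 ≤ n := by exact_mod_cast hn ▸ hy
    have hy' : y = ((n.toNat : ℕ) : ℝ) := by
      rw [hn]; exact_mod_cast (Int.toNat_of_nonneg hn0).symm
    rw [hy', Nat.floor_natCast]; ring
  · rw [← Int.self_sub_floor, ← natCast_floor_eq_intCast_floor hy]
    ring

theorem sum_B1_reciprocal (x θ : ℝ) (hx : 0 < x) (hθ : 0 < θ) :
    ∑ n ∈ Finset.Icc 1 ⌊θ * x⌋₊, B1 ((n : ℝ) / θ) + ∑ m ∈ Finset.Icc 1 ⌊x⌋₊, B1 ((m : ℝ) * θ) =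
      1 / (2 * θ) * (Int.fract (θ * x) - θ * Int.fract x) ^ 2 +
        (θ - 1) / (2 * θ) * (Int.fract (θ * x) - θ * Int.fract x) := by
  classical
  set N := ⌊θ * x⌋₊ with hN
  set M := ⌊x⌋₊ with hM
  have hθx : 0 < θ * x := mul_pos hθ hx
  have hNle : (N : ℝ) ≤ θ * x := Nat.floor_le hθx.le
  have hMle : (M : ℝ) ≤ x := Nat.floor_le hx.le
  -- Lemma A
  have lemA : ∀ n ∈ Icc 1 N, (⌊(n:ℝ)/θ⌋₊ : ℝ)
      = ∑ m ∈ Icc 1 M, (if (m:ℝ)*θ ≤ (n:ℝ) then (1:ℝ) else 0) := by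
    intro n hn
    simp only [mem_Icc] at hn
    have hnx : (n:ℝ)/θ ≤ x := by
      rw [div_le_iff₀ hθ]
      calc (n:ℝ) ≤ N := by exact_mod_cast hn.2
        _ ≤ θ * x := hNle
        _ = x * θ := mul_comm _ _
    have hKM : ⌊(n:ℝ)/θ⌋₊ ≤ M := Nat.floor_mono hnx
    rw [Finset.sum_boole]
    have hfil : (Icc 1 M).filter (fun m : ℕ => (m:ℝ)*θ ≤ (n:ℝ)) = Icc 1 ⌊(n:ℝ)/θ⌋₊ := by
      ext m
      simp only [mem_filter, mem_Icc]
      constructor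
      · rintro ⟨⟨h1, _⟩, h3⟩
        exact ⟨h1, Nat.le_floor ((le_div_iff₀ hθ).mpr h3)⟩
      · rintro ⟨h1, h2⟩
        have hm : (m:ℝ) ≤ (n:ℝ)/θ :=
          le_trans (by exact_mod_cast h2) (Nat.floor_le (by positivity))
        exact ⟨⟨h1, le_trans h2 hKM⟩, (le_div_iff₀ hθ).mp hm⟩
    rw [hfil, Nat.card_Icc]
    simp
  -- Lemma B
  have lemB : ∀ m ∈ Icc 1 M, (⌊(m:ℝ)*θ⌋₊ : ℝ)
      = ∑ n ∈ Icc 1 N, (if (n:ℝ) ≤ (m:ℝ)*θ then (1:ℝ) else 0) := by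
    intro m hm
    simp only [mem_Icc] at hm
    have hmx : (m:ℝ)*θ ≤ θ * x := by
      rw [mul_comm θ x]
      have : (m:ℝ) ≤ x := le_trans (by exact_mod_cast hm.2) hMle
      exact mul_le_mul_of_nonneg_right this hθ.le
    have hKN : ⌊(m:ℝ)*θ⌋₊ ≤ N := Nat.floor_mono hmx
    rw [Finset.sum_boole]
    have hfil : (Icc 1 N).filter (fun n : ℕ => (n:ℝ) ≤ (m:ℝ)*θ) = Icc 1 ⌊(m:ℝ)*θ⌋₊ := by
      ext n
      simp only [mem_filter, mem_Icc]
      constructor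
      · rintro ⟨⟨h1, _⟩, h3⟩
        exact ⟨h1, Nat.le_floor h3⟩
      · rintro ⟨h1, h2⟩
        have : (n:ℝ) ≤ (m:ℝ)*θ :=
          le_trans (by exact_mod_cast h2) (Nat.floor_le (by positivity))
        exact ⟨⟨h1, le_trans h2 hKN⟩, this⟩
    rw [hfil, Nat.card_Icc]
    simp
  -- Lemma C
  have lemC : ∀ n ∈ Icc 1 N, (if ∃ k : ℤ, (n:ℝ)/θ = k then (1:ℝ) else 0)
      = ∑ m ∈ Icc 1 M, (if (n:ℝ) = (m:ℝ)*θ then (1:ℝ) else 0) := by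
    intro n hn
    simp only [mem_Icc] at hn
    have hn1 : (1:ℝ) ≤ (n:ℝ) := by exact_mod_cast hn.1
    have hnpos : (0:ℝ) < (n:ℝ)/θ := by positivity
    rw [Finset.sum_boole]
    split_ifs with h
    · obtain ⟨k, hk⟩ := h
      have hk0 : 0 < k := by exact_mod_cast hk ▸ hnpos
      set m0 := k.toNat with hm0
      have hm0k : (m0:ℝ) = (k:ℝ) := by exact_mod_cast Int.toNat_of_nonneg hk0.le
      have hm0eq : (n:ℝ) = (m0:ℝ)*θ := by
        rw [hm0k, ← hk]; field_simp
      have hm0M : m0 ≤ M := by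
        apply Nat.le_floor
        rw [hm0k, ← hk, div_le_iff₀ hθ, mul_comm x θ]
        calc (n:ℝ) ≤ N := by exact_mod_cast hn.2
          _ ≤ θ * x := hNle
      have hm01 : 1 ≤ m0 := by
        rcases Nat.eq_zero_or_pos m0 with h0 | h1
        · exfalso
          rw [h0] at hm0eq
          push_cast at hm0eq
          nlinarith
        · exact h1
      have hfil : (Icc 1 M).filter (fun m : ℕ => (n:ℝ) = (m:ℝ)*θ) = ({m0} : Finset ℕ) := by
        ext m
        simp only [mem_filter, mem_Icc, mem_singleton]
        constructor
        · rintro ⟨_, he⟩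
          have : (m:ℝ) = (m0:ℝ) := by
            have h1 : (m:ℝ)*θ = (m0:ℝ)*θ := by rw [← he, hm0eq]
            exact mul_right_cancel₀ hθ.ne' h1
          exact_mod_cast this
        · rintro rfl
          exact ⟨⟨hm01, hm0M⟩, hm0eq⟩
      rw [hfil]; simp
    · have hfil : (Icc 1 M).filter (fun m : ℕ => (n:ℝ) = (m:ℝ)*θ) = (∅ : Finset ℕ) := by
        ext m
        simp only [mem_filter, mem_Icc, Finset.notMem_empty, iff_false, not_and]
        rintro _ he
        exact h ⟨(m:ℤ), by push_cast; rw [he]; field_simp⟩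
      rw [hfil]; simp
  -- Lemma D
  have lemD : ∀ m ∈ Icc 1 M, (if ∃ k : ℤ, (m:ℝ)*θ = k then (1:ℝ) else 0)
      = ∑ n ∈ Icc 1 N, (if (n:ℝ) = (m:ℝ)*θ then (1:ℝ) else 0) := by
    intro m hm
    simp only [mem_Icc] at hm
    have hm1 : (1:ℝ) ≤ (m:ℝ) := by exact_mod_cast hm.1
    have hmpos : (0:ℝ) < (m:ℝ)*θ := by positivity
    rw [Finset.sum_boole]
    split_ifs with h
    · obtain ⟨k, hk⟩ := h
      have hk0 : 0 < k := by exact_mod_cast hk ▸ hmpos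
      set n0 := k.toNat with hn0
      have hn0k : (n0:ℝ) = (k:ℝ) := by exact_mod_cast Int.toNat_of_nonneg hk0.le
      have hn0eq : (n0:ℝ) = (m:ℝ)*θ := by rw [hn0k, ← hk]
      have hn0N : n0 ≤ N := by
        apply Nat.le_floor
        rw [hn0eq, mul_comm θ x]
        have : (m:ℝ) ≤ x := le_trans (by exact_mod_cast hm.2) hMle
        exact mul_le_mul_of_nonneg_right this hθ.le
      have hn01 : 1 ≤ n0 := by
        rcases Nat.eq_zero_or_pos n0 with h0 | h1
        · exfalso
          rw [h0] at hn0eq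
          push_cast at hn0eq
          nlinarith
        · exact h1
      have hfil : (Icc 1 N).filter (fun n : ℕ => (n:ℝ) = (m:ℝ)*θ) = ({n0} : Finset ℕ) := by
        ext n
        simp only [mem_filter, mem_Icc, mem_singleton]
        constructor
        · rintro ⟨_, he⟩
          have : (n:ℝ) = (n0:ℝ) := by rw [he, hn0eq]
          exact_mod_cast this
        · rintro rfl
          exact ⟨⟨hn01, hn0N⟩, hn0eq⟩
      rw [hfil]; simp
    · have hfil : (Icc 1 N).filter (fun n : ℕ => (n:ℝ) = (m:ℝ)*θ) = (∅ : Finset ℕ) := by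
        ext n
        simp only [mem_filter, mem_Icc, Finset.notMem_empty, iff_false, not_and]
        rintro _ he
        exact h ⟨(n:ℤ), by push_cast; rw [← he]⟩
      rw [hfil]; simp
  -- the double sum of equality indicators
  set E := ∑ n ∈ Icc 1 N, ∑ m ∈ Icc 1 M, (if (n:ℝ) = (m:ℝ)*θ then (1:ℝ) else 0) with hE
  -- floor sum reciprocity
  have hF : (∑ n ∈ Icc 1 N, (⌊(n:ℝ)/θ⌋₊ : ℝ)) + (∑ m ∈ Icc 1 M, (⌊(m:ℝ)*θ⌋₊ : ℝ))
      = (N:ℝ)*M + E := by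
    have e1 : (∑ n ∈ Icc 1 N, (⌊(n:ℝ)/θ⌋₊ : ℝ))
        = ∑ n ∈ Icc 1 N, ∑ m ∈ Icc 1 M, (if (m:ℝ)*θ ≤ (n:ℝ) then (1:ℝ) else 0) :=
      Finset.sum_congr rfl lemA
    have e2 : (∑ m ∈ Icc 1 M, (⌊(m:ℝ)*θ⌋₊ : ℝ))
        = ∑ n ∈ Icc 1 N, ∑ m ∈ Icc 1 M, (if (n:ℝ) ≤ (m:ℝ)*θ then (1:ℝ) else 0) := by
      rw [Finset.sum_congr rfl lemB]; exact Finset.sum_comm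
    rw [e1, e2, ← Finset.sum_add_distrib]
    have e3 : ∀ n ∈ Icc 1 N,
        ((∑ m ∈ Icc 1 M, (if (m:ℝ)*θ ≤ (n:ℝ) then (1:ℝ) else 0))
        + ∑ m ∈ Icc 1 M, (if (n:ℝ) ≤ (m:ℝ)*θ then (1:ℝ) else 0))
        = (M:ℝ) + ∑ m ∈ Icc 1 M, (if (n:ℝ) = (m:ℝ)*θ then (1:ℝ) else 0) := by
      intro n _
      rw [← Finset.sum_add_distrib]
      have e4 : ∀ m ∈ Icc 1 M,
          ((if (m:ℝ)*θ ≤ (n:ℝ) then (1:ℝ) else 0) + (if (n:ℝ) ≤ (m:ℝ)*θ then (1:ℝ) else 0))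
          = 1 + (if (n:ℝ) = (m:ℝ)*θ then (1:ℝ) else 0) := by
        intro m _
        rcases lt_trichotomy ((m:ℝ)*θ) ((n:ℝ)) with hlt | heq | hgt
        · rw [if_pos hlt.le, if_neg (not_le.mpr hlt),
            if_neg (fun he => absurd he.symm hlt.ne)]
        · rw [if_pos heq.le, if_pos heq.ge, if_pos heq.symm]
        · rw [if_neg (not_le.mpr hgt), if_pos hgt.le, if_neg hgt.ne]; ring
      rw [Finset.sum_congr rfl e4, Finset.sum_add_distrib]
      simp [Nat.card_Icc]
    rw [Finset.sum_congr rfl e3, Finset.sum_add_distrib, hE]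
    congr 1
    simp [Nat.card_Icc, mul_comm]
  have hC : (∑ n ∈ Icc 1 N, (if ∃ k : ℤ, (n:ℝ)/θ = k then (1:ℝ) else 0)) = E :=
    Finset.sum_congr rfl lemC
  have hD : (∑ m ∈ Icc 1 M, (if ∃ k : ℤ, (m:ℝ)*θ = k then (1:ℝ) else 0)) = E := by
    rw [Finset.sum_congr rfl lemD, hE]; exact Finset.sum_comm
  -- rewrite B1 sums
  have hB1a : ∀ n ∈ Icc 1 N, B1 ((n:ℝ)/θ)
      = (n:ℝ)/θ - (⌊(n:ℝ)/θ⌋₊ : ℝ) - 1/2 + (if ∃ k : ℤ, (n:ℝ)/θ = k then (1:ℝ) else 0)/2 := by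
    intro n _
    exact B1_eq _ (by positivity)
  have hB1b : ∀ m ∈ Icc 1 M, B1 ((m:ℝ)*θ)
      = (m:ℝ)*θ - (⌊(m:ℝ)*θ⌋₊ : ℝ) - 1/2 + (if ∃ k : ℤ, (m:ℝ)*θ = k then (1:ℝ) else 0)/2 := by
    intro m _
    exact B1_eq _ (by positivity)
  rw [Finset.sum_congr rfl hB1a, Finset.sum_congr rfl hB1b]
  simp only [Finset.sum_add_distrib, Finset.sum_sub_distrib, ← Finset.sum_div,
    Finset.sum_const, Nat.card_Icc, Nat.add_sub_cancel, nsmul_eq_mul, mul_one]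
  rw [hC, hD, gaussR]
  have hs2 : ∑ m ∈ Icc 1 M, (m:ℝ)*θ = (M:ℝ)*(M+1)/2*θ := by
    rw [← Finset.sum_mul, gaussR]
  rw [hs2]
  -- fract values
  have hfr1 : Int.fract (θ * x) = θ * x - (N:ℝ) := by
    rw [← Int.self_sub_floor, ← natCast_floor_eq_intCast_floor hθx.le]
  have hfr2 : Int.fract x = x - (M:ℝ) := by
    rw [← Int.self_sub_floor, ← natCast_floor_eq_intCast_floor hx.le]
  rw [hfr1, hfr2]
  have hFG : (∑ n ∈ Icc 1 N, (⌊(n:ℝ)/θ⌋₊ : ℝ))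
      = (N:ℝ)*M + E - (∑ m ∈ Icc 1 M, (⌊(m:ℝ)*θ⌋₊ : ℝ)) := by linarith
  rw [hFG]
  field_simp
  ring
end

section
/- ∫_0^1 x²·ψ'(x) dx = log(2π) − γ, where ψ' is the trigamma function and γ is the Euler–Mascheroni constant. -/
/-!
Differentiating the Bohr–Mollerup approximations of `log Γ` twice, with locally uniform
convergence of the derivatives, gives `ψ'(x) = ∑ₙ (x + n)⁻²` on `(0, ∞)`. The terms of
`x² ψ'(x) = ∑ₙ x² / (x + n)²` are bounded by `(n + 1)⁻²` on `[0, 1]`, so the series may be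
integrated termwise, and `∫₀¹ x² / (x + n)² dx = 2 - 1 / (n + 1) - 2n (log (n + 1) - log n)`.
The partial sums of these integrals telescope to `2N - H_N - 2 (N log N - log N!)`; by Stirling's
formula and `H_N - log N → γ` they tend to `log (2π) - γ`.
-/

/-- The digamma function `ψ = Γ'/Γ`, as the derivative of `log Γ`. -/
noncomputable def digamma (x : ℝ) : ℝ := deriv (fun y => Real.log (Real.Gamma y)) x

open Real Filter Topology Set Finset MeasureTheory intervalIntegral
open scoped Nat Interval

lemma summable_inv_natCast_add_sq (a : ℝ) : Summable fun n : ℕ => (((n : ℝ) + a) ^ 2)⁻¹ :=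
  ((summable_one_div_nat_add_rpow a 2).mpr one_lt_two).congr fun n => by
    rw [one_div, rpow_two, sq_abs]

lemma abs_inv_sub_inv_add_le {c y : ℝ} (hc : 0 < c) (hy : 0 ≤ y) :
    |c⁻¹ - (y + c)⁻¹| ≤ y / c ^ 2 := by
  have hyc : 0 < y + c := by positivity
  rw [inv_sub_inv hc.ne' hyc.ne', add_sub_cancel_right, abs_of_nonneg (by positivity), sq]
  gcongr
  linarith

noncomputable def digammaSeq (n : ℕ) (x : ℝ) : ℝ :=
  log n - ∑ m ∈ range (n + 1), (x + m)⁻¹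

noncomputable def trigammaSeq (n : ℕ) (x : ℝ) : ℝ :=
  ∑ m ∈ range (n + 1), ((x + m) ^ 2)⁻¹

noncomputable def digammaSeries (x : ℝ) : ℝ :=
  -eulerMascheroniConstant - x⁻¹ + ∑' m : ℕ, (((m : ℝ) + 1)⁻¹ - (x + (m + 1))⁻¹)

lemma hasDerivAt_logGammaSeq (n : ℕ) {x : ℝ} (hx : 0 < x) :
    HasDerivAt (fun y => BohrMollerup.logGammaSeq y n) (digammaSeq n x) x := by
  have hlog : HasDerivAt (fun y => ∑ m ∈ range (n + 1), log (y + m))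
      (∑ m ∈ range (n + 1), (x + m)⁻¹) x :=
    HasDerivAt.fun_sum fun m _ => by
      simpa using ((hasDerivAt_id x).add_const (m : ℝ)).log (by positivity)
  simpa [BohrMollerup.logGammaSeq, digammaSeq] using
    (((hasDerivAt_id x).mul_const (log n)).add_const (log n !)).fun_sub hlog

lemma hasDerivAt_digammaSeq (n : ℕ) {x : ℝ} (hx : 0 < x) :
    HasDerivAt (digammaSeq n) (trigammaSeq n x) x := by
  have hinv : HasDerivAt (fun y : ℝ => ∑ m ∈ range (n + 1), (y + m)⁻¹)
      (∑ m ∈ range (n + 1), -((x + m) ^ 2)⁻¹) x :=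
    HasDerivAt.fun_sum fun m _ => by
      simpa [neg_div, one_div] using ((hasDerivAt_id x).add_const (m : ℝ)).fun_inv (by positivity)
  unfold digammaSeq trigammaSeq
  simpa using (hasDerivAt_const x (log n)).fun_sub hinv

lemma digammaSeq_eq (n : ℕ) (x : ℝ) :
    digammaSeq n x = (log n - harmonic n) +
      ∑ m ∈ range n, (((m : ℝ) + 1)⁻¹ - (x + (m + 1))⁻¹) - x⁻¹ := by
  rw [digammaSeq, sum_range_succ', harmonic, sum_sub_distrib]
  push_cast
  ring

lemma tendstoUniformlyOn_digammaSeq (b : ℝ) :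
    TendstoUniformlyOn digammaSeq digammaSeries atTop (Ioo 0 b) := by
  have hγ : Tendsto (fun n : ℕ => log n - harmonic n) atTop (𝓝 (-eulerMascheroniConstant)) := by
    simpa using tendsto_harmonic_sub_log.neg
  have hsum := tendstoUniformlyOn_tsum_nat
    (f := fun (m : ℕ) (x : ℝ) => ((m : ℝ) + 1)⁻¹ - (x + (m + 1))⁻¹) (s := Ioo 0 b)
    ((summable_inv_natCast_add_sq 1).mul_left b) fun m x hx => by
      simpa [div_eq_mul_inv] using
        (abs_inv_sub_inv_add_le (c := (m : ℝ) + 1) (by positivity) hx.1.le).trans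
          (div_le_div_of_nonneg_right hx.2.le (by positivity))
  have hinv : TendstoUniformlyOn (fun (_ : ℕ) (x : ℝ) => x⁻¹) (·⁻¹) atTop (Ioo 0 b) :=
    fun _ hu => Eventually.of_forall fun _ _ _ => refl_mem_uniformity hu
  refine (((hγ.tendstoUniformlyOn_const _).add hsum).sub hinv).congr ?_ |>.congr_right ?_
  · exact Eventually.of_forall fun n x _ => (digammaSeq_eq n x).symm
  · intro x _
    simp only [Pi.add_apply, Pi.sub_apply, digammaSeries]
    ring

lemma tendstoUniformlyOn_trigammaSeq {a : ℝ} (ha : 0 < a) :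
    TendstoUniformlyOn trigammaSeq (fun x => ∑' m : ℕ, ((x + m) ^ 2)⁻¹) atTop (Ioi a) := by
  have hsum := tendstoUniformlyOn_tsum_nat (f := fun (m : ℕ) (x : ℝ) => ((x + m) ^ 2)⁻¹)
    (s := Ioi a) ((summable_inv_natCast_add_sq a).congr fun m => by rw [add_comm])
    fun m x hx => by
      rw [norm_inv, norm_pow, Real.norm_of_nonneg (by linarith [hx.out, m.cast_nonneg (α := ℝ)])]
      gcongr
      exact hx.out.le
  exact fun u hu => (tendsto_add_atTop_nat 1).eventually (hsum u hu)

lemma hasDerivAt_log_Gamma {x : ℝ} (hx : 0 < x) :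
    HasDerivAt (fun y => log (Gamma y)) (digammaSeries x) x :=
  hasDerivAt_of_tendstoUniformlyOn (f := fun n y => BohrMollerup.logGammaSeq y n) isOpen_Ioo
    (tendstoUniformlyOn_digammaSeq (x + 1))
    (Eventually.of_forall fun n _ hy => hasDerivAt_logGammaSeq n hy.1)
    (fun _ hy => BohrMollerup.tendsto_log_gamma hy.1) ⟨hx, lt_add_one x⟩

lemma hasDerivAt_digammaSeries {x : ℝ} (hx : 0 < x) :
    HasDerivAt digammaSeries (∑' m : ℕ, ((x + m) ^ 2)⁻¹) x :=
  hasDerivAt_of_tendstoUniformlyOn (f := digammaSeq) isOpen_Ioi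
    (tendstoUniformlyOn_trigammaSeq (half_pos hx))
    (Eventually.of_forall fun n _ hy => hasDerivAt_digammaSeq n ((half_pos hx).trans hy))
    (fun y hy => (tendstoUniformlyOn_digammaSeq (y + 1)).tendsto_at
      ⟨(half_pos hx).trans hy, lt_add_one y⟩)
    (half_lt_self hx)

theorem deriv_digamma {x : ℝ} (hx : 0 < x) : deriv digamma x = ∑' n : ℕ, ((x + n) ^ 2)⁻¹ := by
  have h : digamma =ᶠ[𝓝 x] digammaSeries :=
    eventually_gt_nhds hx |>.mono fun y hy => (hasDerivAt_log_Gamma hy).deriv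
  rw [h.deriv_eq, (hasDerivAt_digammaSeries hx).deriv]

theorem integral_sq_div_add_sq {c : ℝ} (hc : 0 ≤ c) :
    ∫ x in (0 : ℝ)..1, x ^ 2 / (x + c) ^ 2 = 2 - (c + 1)⁻¹ - 2 * c * (log (c + 1) - log c) := by
  rcases hc.eq_or_lt with rfl | hc
  · have h : ∀ᵐ x : ℝ, x ∈ Ι (0 : ℝ) 1 → x ^ 2 / (x + 0) ^ 2 = 1 := Eventually.of_forall
      fun x hx => by
        rw [uIoc_of_le zero_le_one] at hx
        rw [add_zero, div_self (pow_pos hx.1 2).ne']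
    rw [integral_congr_ae h]
    norm_num
  have hpos : ∀ x ∈ uIcc (0 : ℝ) 1, 0 < x + c := fun x hx => by
    rw [Set.uIcc_of_le zero_le_one] at hx
    linarith [hx.1]
  have hderiv : ∀ x ∈ uIcc (0 : ℝ) 1,
      HasDerivAt (fun x => x - 2 * c * log (x + c) - c ^ 2 * (x + c)⁻¹) (x ^ 2 / (x + c) ^ 2) x :=
    fun x hx => by
      have hxc := (hasDerivAt_id' x).add_const c
      refine (((hasDerivAt_id' x).fun_sub ((hxc.log (hpos x hx).ne').const_mul (2 * c))).fun_sub
        ((hxc.fun_inv (hpos x hx).ne').const_mul (c ^ 2))).congr_deriv ?_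
      have := (hpos x hx).ne'
      field_simp
      ring
  have hint : IntervalIntegrable (fun x : ℝ => x ^ 2 / (x + c) ^ 2) volume 0 1 :=
    ContinuousOn.intervalIntegrable <|
      (continuousOn_pow 2).div (by fun_prop) fun x hx => pow_ne_zero 2 (hpos x hx).ne'
  rw [integral_eq_sub_of_hasDerivAt hderiv hint]
  have := hc.ne'
  rw [zero_add, add_comm 1 c]
  field_simp
  ring

lemma sq_div_add_sq_le {x c : ℝ} (hx₀ : 0 ≤ x) (hx₁ : x ≤ 1) (hc : 0 ≤ c) :
    x ^ 2 / (x + c) ^ 2 ≤ ((c + 1) ^ 2)⁻¹ := by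
  rw [← div_pow, ← inv_pow]
  refine pow_le_pow_left₀ (by positivity) ?_ 2
  rcases hx₀.eq_or_lt with rfl | hx
  · simp only [zero_div]; positivity
  rw [div_le_iff₀ (by positivity), ← div_eq_inv_mul, le_div_iff₀ (by positivity)]
  nlinarith

lemma hasSum_integral_sq_div_add_sq :
    HasSum (fun n : ℕ => ∫ x in (0 : ℝ)..1, x ^ 2 / (x + n) ^ 2)
      (∫ x in (0 : ℝ)..1, ∑' n : ℕ, x ^ 2 / (x + n) ^ 2) := by
  have hbound : ∀ n : ℕ, ∀ x ∈ Ι (0 : ℝ) 1, ‖x ^ 2 / (x + n) ^ 2‖ ≤ (((n : ℝ) + 1) ^ 2)⁻¹ :=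
    fun n x hx => by
      rw [uIoc_of_le zero_le_one] at hx
      rw [norm_of_nonneg (by positivity)]
      exact sq_div_add_sq_le hx.1.le hx.2 n.cast_nonneg
  have hmeas (n : ℕ) : Measurable fun x : ℝ => x ^ 2 / (x + n) ^ 2 := by fun_prop
  refine hasSum_integral_of_dominated_convergence (fun n _ => (((n : ℝ) + 1) ^ 2)⁻¹)
    (fun n => (hmeas n).aestronglyMeasurable) (fun n => ae_of_all _ (hbound n))
    (ae_of_all _ fun _ _ => summable_inv_natCast_add_sq 1) intervalIntegrable_const
    (ae_of_all _ fun x hx => ?_)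
  exact (Summable.of_norm_bounded (summable_inv_natCast_add_sq 1) fun n => hbound n x hx).hasSum

lemma sum_range_two_sub_inv_sub_mul_log (N : ℕ) :
    ∑ n ∈ range N, (2 - ((n : ℝ) + 1)⁻¹ - 2 * n * (log (n + 1) - log n)) =
      2 * N - harmonic N - 2 * (N * log N - log N !) := by
  induction N with
  | zero => simp
  | succ N ih =>
    rw [sum_range_succ, ih, harmonic_succ, Nat.factorial_succ]
    push_cast
    rw [log_mul (by positivity) (by positivity)]
    ring

lemma tendsto_sum_range_two_sub_inv_sub_mul_log :
    Tendsto (fun N : ℕ => ∑ n ∈ range N, (2 - ((n : ℝ) + 1)⁻¹ - 2 * n * (log (n + 1) - log n)))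
      atTop (𝓝 (log (2 * π) - eulerMascheroniConstant)) := by
  have hlim : Tendsto (fun N : ℕ => log 2 + 2 * log (Stirling.stirlingSeq N) - (harmonic N - log N))
      atTop (𝓝 (log 2 + 2 * log √π - eulerMascheroniConstant)) :=
    ((Stirling.tendsto_stirlingSeq_sqrt_pi.log (by positivity)).const_mul 2 |>.const_add _).sub
      tendsto_harmonic_sub_log
  have hπ : 2 * log √π = log π := by
    rw [log_sqrt pi_pos.le]
    ring
  rw [log_mul two_ne_zero pi_ne_zero, ← hπ]
  refine hlim.congr' ?_
  filter_upwards [eventually_ne_atTop 0] with N hN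
  have hN' : (N : ℝ) ≠ 0 := Nat.cast_ne_zero.2 hN
  rw [sum_range_two_sub_inv_sub_mul_log, Stirling.log_stirlingSeq_formula, log_mul two_ne_zero hN',
    log_div hN' (exp_ne_zero 1), log_exp]
  ring

theorem integral_sq_trigamma :
    ∫ x in (0 : ℝ)..1, x ^ 2 * deriv digamma x =
      Real.log (2 * Real.pi) - Real.eulerMascheroniConstant := by
  have hψ : ∀ x ∈ Ι (0 : ℝ) 1, x ^ 2 * deriv digamma x = ∑' n : ℕ, x ^ 2 / (x + n) ^ 2 := by
    intro x hx
    rw [uIoc_of_le zero_le_one] at hx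
    simp only [deriv_digamma hx.1, ← tsum_mul_left, div_eq_mul_inv]
  have hsum := hasSum_integral_sq_div_add_sq
  simp only [integral_sq_div_add_sq (Nat.cast_nonneg _)] at hsum
  rw [integral_congr_ae (ae_of_all _ hψ)]
  exact tendsto_nhds_unique hsum.tendsto_sum_nat tendsto_sum_range_two_sub_inv_sub_mul_log
end

section
/- Let p, q be coprime integers with q ≥ 2. Then the Vasyunin sum satisfies |V(p,q)| ≪ q log q, i.e., there is an absolute constant C such that |∑_{k=1}^{q−1} {kp/q} cot(kπ/q)| ≤ C·q·log q. -/
/-!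
Bounding `{kp/q}` by `1` reduces the claim to `∑ |cot (kπ/q)|`. Since
`|cot x| ≤ 1/x + 1/(π - x)` on `(0, π)`, and the two halves of the resulting sum agree under
`k ↦ q - k`, this is at most `(2q/π) H_{q-1} ≤ (2q/π) (1 + log q)`.
-/

open Real Finset

namespace Real

theorem abs_cot_le_inv {x : ℝ} (h0 : 0 < x) (h2 : x ≤ π / 2) : |cot x| ≤ x⁻¹ := by
  rcases h2.eq_or_lt with rfl | hlt
  · rw [cot_eq_cos_div_sin, cos_pi_div_two, zero_div, abs_zero]
    positivity
  · have htan := le_tan h0.le hlt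
    rw [← tan_inv_eq_cot, abs_of_nonneg (inv_nonneg.2 (h0.le.trans htan))]
    exact inv_anti₀ h0 htan

theorem cot_pi_sub (x : ℝ) : cot (π - x) = -cot x := by
  rw [cot_eq_cos_div_sin, cot_eq_cos_div_sin, cos_pi_sub, sin_pi_sub, neg_div]

theorem abs_cot_le_inv_add_inv_pi_sub {x : ℝ} (h0 : 0 < x) (h1 : x < π) :
    |cot x| ≤ x⁻¹ + (π - x)⁻¹ := by
  have h0' : 0 < π - x := sub_pos.2 h1
  rcases le_total x (π / 2) with h | h
  · linarith [abs_cot_le_inv h0 h, inv_pos.2 h0']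
  · have := abs_cot_le_inv h0' (by linarith)
    rw [cot_pi_sub, abs_neg] at this
    linarith [inv_pos.2 h0]

end Real

theorem abs_cot_mul_pi_div_le {k q : ℝ} (hk : 0 < k) (hkq : k < q) :
    |cot (k * π / q)| ≤ q / π * (k⁻¹ + (q - k)⁻¹) := by
  have hq : 0 < q := hk.trans hkq
  have hx1 : k * π / q < π := by
    rw [div_lt_iff₀ hq, mul_comm π]
    exact mul_lt_mul_of_pos_right hkq pi_pos
  have hsub : π - k * π / q = (q - k) * π / q := by
    field_simp
  calc |cot (k * π / q)| ≤ (k * π / q)⁻¹ + (π - k * π / q)⁻¹ :=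
        abs_cot_le_inv_add_inv_pi_sub (by positivity) hx1
    _ = q / π * (k⁻¹ + (q - k)⁻¹) := by
        rw [hsub]
        field_simp

theorem sum_Icc_inv_natCast_sub (n : ℕ) :
    ∑ k ∈ Icc 1 (n - 1), ((n : ℝ) - k)⁻¹ = ∑ k ∈ Icc 1 (n - 1), (k : ℝ)⁻¹ := by
  refine sum_nbij' (n - ·) (n - ·) ?_ ?_ ?_ ?_ ?_ <;> intro k hk <;>
    simp only [mem_Icc] at hk ⊢
  · omega
  · omega
  · omega
  · omega
  · rw [Nat.cast_sub (by omega)]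

theorem sum_Icc_inv_natCast_le_one_add_log (n : ℕ) :
    ∑ k ∈ Icc 1 (n - 1), (k : ℝ)⁻¹ ≤ 1 + log n := by
  have hharm : ∑ k ∈ Icc 1 (n - 1), (k : ℝ)⁻¹ = harmonic (n - 1) := by
    simp [harmonic_eq_sum_Icc]
  have hlog : log ((n - 1 : ℕ) : ℝ) ≤ log n := by
    rcases Nat.eq_zero_or_pos (n - 1) with h | h
    · rw [h, Nat.cast_zero, log_zero]
      exact log_natCast_nonneg n
    · exact log_le_log (by exact_mod_cast h) (by exact_mod_cast Nat.sub_le n 1)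
  rw [hharm]
  linarith [harmonic_le_one_add_log (n - 1)]

theorem sum_Icc_abs_cot_mul_pi_div_le (q : ℕ) :
    ∑ k ∈ Icc 1 (q - 1), |cot (k * π / q)| ≤ 2 * q / π * (1 + log q) := by
  calc ∑ k ∈ Icc 1 (q - 1), |cot (k * π / q)|
      ≤ ∑ k ∈ Icc 1 (q - 1), q / π * ((k : ℝ)⁻¹ + ((q : ℝ) - k)⁻¹) := by
        refine sum_le_sum fun k hk => abs_cot_mul_pi_div_le ?_ ?_ <;>
          simp only [mem_Icc] at hk
        · exact_mod_cast hk.1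
        · exact_mod_cast (by omega : k < q)
    _ = 2 * q / π * ∑ k ∈ Icc 1 (q - 1), (k : ℝ)⁻¹ := by
        rw [← mul_sum, sum_add_distrib, sum_Icc_inv_natCast_sub]
        ring
    _ ≤ 2 * q / π * (1 + log q) := by
        gcongr
        exact sum_Icc_inv_natCast_le_one_add_log q

theorem vasyunin_bound :
    ∃ C : ℝ, ∀ (p : ℤ) (q : ℕ), 2 ≤ q → Int.gcd p q = 1 →
      |∑ k ∈ Finset.Icc 1 (q - 1), Int.fract ((k : ℝ) * p / q) * Real.cot (k * Real.pi / q)| ≤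
        C * q * Real.log q := by
  refine ⟨2, fun p q hq _ => ?_⟩
  have hlog : 1 ≤ 2 * log q := by
    have : log 2 ≤ log q := log_le_log two_pos (by exact_mod_cast hq)
    linarith [log_two_gt_d9]
  calc |∑ k ∈ Icc 1 (q - 1), Int.fract ((k : ℝ) * p / q) * cot (k * π / q)|
      ≤ ∑ k ∈ Icc 1 (q - 1), |cot (k * π / q)| := by
        refine (abs_sum_le_sum_abs _ _).trans (sum_le_sum fun k _ => ?_)
        rw [abs_mul, abs_of_nonneg (Int.fract_nonneg _)]
        exact mul_le_of_le_one_left (abs_nonneg _) (Int.fract_lt_one _).le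
    _ ≤ 2 * q / π * (1 + log q) := sum_Icc_abs_cot_mul_pi_div_le q
    _ ≤ 2 * q / 3 * (3 * log q) := by
        gcongr
        · exact pi_gt_three.le
        · linarith
    _ = 2 * q * log q := by ring
end

section
/- Let g : ℤ → ℂ have period q (q a positive integer). The series ∑_{n≥1} g(n)/n converges if and only if ∑_{r=1}^{q} g(r) = 0, and in that case its sum equals −(1/q) ∑_{r=1}^{q} g(r)·ψ(r/q). -/
open Filter Topology

/-!
`log Γ` is convex on `(0, ∞)` and its slope over `[x, x + 1]` is `log x`, so its derivative `ψ`
satisfies `ψ(x) ≤ log x ≤ ψ(x + 1)`; together with `ψ(x + 1) = ψ(x) + 1/x` this gives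
`∑_{m<N} 1/(x + m) = log N - ψ(x) + o(1)`. Grouping the series into blocks of length `q`,
`∑_{n ≤ Nq} g(n)/n = (1/q) ∑_r g(r) ∑_{m<N} 1/(r/q + m)`, which equals
`(S log N - ∑_r g(r) ψ(r/q))/q + o(1)` with `S = ∑_r g(r)`. This converges iff `S = 0`, and
since `g(n)/n → 0` the partial sums at all `N` follow those at multiples of `q`.
-/

open Real Finset

section Digamma

variable {x : ℝ}

lemma differentiableAt_log_Gamma (hx : 0 < x) :
    DifferentiableAt ℝ (fun y => log (Gamma y)) x :=
  (differentiableAt_Gamma fun m => ((neg_nonpos.2 m.cast_nonneg).trans_lt hx).ne').log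
    (Gamma_pos_of_pos hx).ne'

lemma log_Gamma_add_one (hx : 0 < x) : log (Gamma (x + 1)) = log (Gamma x) + log x := by
  rw [Gamma_add_one hx.ne', log_mul hx.ne' (Gamma_pos_of_pos hx).ne', add_comm]

lemma digamma_add_one (hx : 0 < x) : digamma (x + 1) = digamma x + 1 / x := by
  unfold digamma
  rw [← deriv_comp_add_const, one_div, ← deriv_log,
    ← deriv_add (differentiableAt_log_Gamma hx) (differentiableAt_log hx.ne')]
  refine EventuallyEq.deriv_eq ?_
  filter_upwards [eventually_gt_nhds hx] with y hy using log_Gamma_add_one hy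

lemma digamma_add_nat (hx : 0 < x) (N : ℕ) :
    digamma (x + N) = digamma x + ∑ m ∈ range N, 1 / (x + m) := by
  induction N with
  | zero => simp
  | succ N ih =>
    rw [Nat.cast_succ, ← add_assoc, digamma_add_one (by positivity), ih, sum_range_succ,
      add_assoc]

lemma slope_log_Gamma (hx : 0 < x) : slope (log ∘ Gamma) x (x + 1) = log x := by
  simp [slope_def_field, log_Gamma_add_one hx]

lemma digamma_le_log (hx : 0 < x) : digamma x ≤ log x :=
  (convexOn_log_Gamma.deriv_le_slope hx (by positivity : (0 : ℝ) < x + 1) (lt_add_one x)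
    (differentiableAt_log_Gamma hx)).trans_eq (slope_log_Gamma hx)

lemma log_le_digamma_add_one (hx : 0 < x) : log x ≤ digamma (x + 1) :=
  (slope_log_Gamma hx).symm.trans_le <| convexOn_log_Gamma.slope_le_deriv hx
    (by positivity : (0 : ℝ) < x + 1) (lt_add_one x) (differentiableAt_log_Gamma (by positivity))

lemma tendsto_digamma_sub_log : Tendsto (fun y => digamma y - log y) atTop (𝓝 0) := by
  have hlow : Tendsto (fun y => log (y - 1) - log y) atTop (𝓝 0) := by
    simpa [← sub_eq_add_neg] using ((tendsto_log_comp_add_sub_log 1).comp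
      (tendsto_atTop_add_const_right _ (-1) tendsto_id)).neg
  refine tendsto_of_tendsto_of_tendsto_of_le_of_le' hlow tendsto_const_nhds ?_ ?_
  · filter_upwards [eventually_gt_atTop 1] with y hy
    have := log_le_digamma_add_one (sub_pos.2 hy)
    rw [sub_add_cancel] at this
    linarith
  · filter_upwards [eventually_gt_atTop 0] with y hy
    linarith [digamma_le_log hy]

lemma tendsto_log_sub_sum_one_div_add (hx : 0 < x) :
    Tendsto (fun N : ℕ => log N - ∑ m ∈ range N, 1 / (x + m)) atTop (𝓝 (digamma x)) := by
  have hshift : Tendsto (fun N : ℕ => digamma (x + N) - log N) atTop (𝓝 0) := by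
    have h1 := tendsto_digamma_sub_log.comp
      (tendsto_atTop_add_const_left _ x tendsto_natCast_atTop_atTop)
    have h2 := (tendsto_log_comp_add_sub_log x).comp tendsto_natCast_atTop_atTop
    simpa [add_comm] using h1.add h2
  have := hshift.const_sub (digamma x)
  rw [sub_zero] at this
  exact this.congr fun N => by rw [digamma_add_nat hx]; ring

lemma tendsto_ofReal_log_sub_sum_one_div_add (hx : 0 < x) :
    Tendsto (fun N : ℕ => (log N : ℂ) - ∑ m ∈ range N, 1 / ((x : ℂ) + m)) atTop
      (𝓝 (digamma x)) := by
  refine ((Complex.continuous_ofReal.tendsto _).comp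
    (tendsto_log_sub_sum_one_div_add hx)).congr fun N => ?_
  simp only [Function.comp_apply]
  push_cast
  rfl

end Digamma

lemma sum_Icc_one_mul_eq_sum_range_sum_Icc {M : Type*} [AddCommMonoid M] (f : ℕ → M)
    (q N : ℕ) :
    ∑ n ∈ Icc 1 (N * q), f n = ∑ m ∈ range N, ∑ r ∈ Icc 1 q, f (m * q + r) := by
  induction N with
  | zero => simp
  | succ N ih =>
    have hIoc (n : ℕ) : Icc 1 n = Ioc 0 n := rfl
    have htop : ∑ r ∈ Icc 1 q, f (N * q + r) = ∑ n ∈ Ioc (N * q) (N * q + q), f n := by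
      rw [← Icc_add_one_left_eq_Ioc, ← map_add_left_Icc, sum_map]
      rfl
    rw [sum_range_succ, ← ih, htop, Nat.succ_mul, hIoc, hIoc,
      sum_Ioc_consecutive _ (Nat.zero_le _) (Nat.le_add_right _ _)]

lemma tendsto_of_tendsto_comp_mul_of_tendsto_sub {E : Type*} [SeminormedAddCommGroup E]
    {u : ℕ → E} {L : E} {q : ℕ} (hq : 0 < q)
    (hu : Tendsto (fun N => u (N * q)) atTop (𝓝 L))
    (hd : Tendsto (fun n => u (n + 1) - u n) atTop (𝓝 0)) : Tendsto u atTop (𝓝 L) := by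
  have hgap (N : ℕ) : ‖u N - u (N / q * q)‖ ≤
      ∑ i ∈ range q, ‖u (N / q * q + i + 1) - u (N / q * q + i)‖ := by
    obtain ⟨r, hr⟩ := Nat.exists_eq_add_of_le (Nat.div_mul_le_self N q)
    have hrq : r < q := by
      have := Nat.div_add_mod' N q
      have := Nat.mod_lt N hq
      omega
    have htele := sum_range_sub (fun i => u (N / q * q + i)) r
    simp only [← add_assoc, add_zero, ← hr] at htele
    calc ‖u N - u (N / q * q)‖
        = ‖∑ i ∈ range r, (u (N / q * q + i + 1) - u (N / q * q + i))‖ := by rw [htele]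
      _ ≤ ∑ i ∈ range r, ‖u (N / q * q + i + 1) - u (N / q * q + i)‖ := norm_sum_le _ _
      _ ≤ ∑ i ∈ range q, ‖u (N / q * q + i + 1) - u (N / q * q + i)‖ :=
          sum_le_sum_of_subset_of_nonneg (range_subset_range.2 hrq.le)
            fun _ _ _ => norm_nonneg _
  have hblock : Tendsto (fun N => N / q * q) atTop atTop :=
    tendsto_atTop_mono (fun N => Nat.le_mul_of_pos_right _ hq)
      (Nat.tendsto_div_const_atTop hq.ne')
  have htail : Tendsto (fun N => ∑ i ∈ range q, ‖u (N / q * q + i + 1) - u (N / q * q + i)‖)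
      atTop (𝓝 0) := by
    simpa using tendsto_finsetSum (range q) fun i _ =>
      hd.norm.comp ((tendsto_add_atTop_nat i).comp hblock)
  simpa using (hu.comp (Nat.tendsto_div_const_atTop hq.ne')).add (squeeze_zero_norm hgap htail)

lemma Function.Periodic.exists_forall_norm_le {E : Type*} [SeminormedAddGroup E] {g : ℤ → E}
    {c : ℤ} (h : Function.Periodic g c) (hc : 0 < c) : ∃ B, ∀ n, ‖g n‖ ≤ B := by
  obtain ⟨B, hB⟩ := isBounded_iff_forall_norm_le.1 ((Set.finite_Ico 0 c).image g).isBounded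
  refine ⟨B, fun n => ?_⟩
  obtain ⟨y, hy, hgy⟩ := h.exists_mem_Ico₀ hc n
  exact hgy ▸ hB _ (Set.mem_image_of_mem g hy)

lemma Function.Periodic.tendsto_div_natCast {g : ℤ → ℂ} {c : ℤ} (h : Function.Periodic g c)
    (hc : 0 < c) : Tendsto (fun n : ℕ => g n / n) atTop (𝓝 0) := by
  obtain ⟨B, hB⟩ := h.exists_forall_norm_le hc
  refine squeeze_zero_norm (fun n => ?_) (tendsto_const_div_atTop_nhds_zero_nat B)
  rw [norm_div, Complex.norm_natCast]
  exact div_le_div_of_nonneg_right (hB n) n.cast_nonneg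

lemma eq_zero_of_tendsto_log_mul {c L : ℂ}
    (h : Tendsto (fun N : ℕ => (log N : ℂ) * c) atTop (𝓝 L)) : c = 0 := by
  by_contra hc
  have hlog : Tendsto (fun N : ℕ => log N) atTop (𝓝 (L / c).re) := by
    have := (Complex.continuous_re.tendsto _).comp (h.div_const c)
    exact this.congr fun N => by
      rw [Function.comp_apply, mul_div_cancel_right₀ _ hc, Complex.ofReal_re]
  exact not_tendsto_nhds_of_tendsto_atTop
    (tendsto_log_atTop.comp tendsto_natCast_atTop_atTop) _ hlog

lemma Function.Periodic.sum_Icc_mul_div_natCast {g : ℤ → ℂ} {q : ℕ} (hq : 0 < q)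
    (hper : Function.Periodic g q) (N : ℕ) : ∑ n ∈ Icc 1 (N * q), g n / n =
      1 / q * ∑ r ∈ Icc 1 q, g r * ∑ m ∈ range N, 1 / ((r : ℂ) / q + m) := by
  rw [sum_Icc_one_mul_eq_sum_range_sum_Icc, sum_comm, mul_sum]
  refine sum_congr rfl fun r hr => ?_
  rw [mul_sum, mul_sum]
  refine sum_congr rfl fun m _ => ?_
  have hg : g ((m * q + r : ℕ) : ℤ) = g r := by
    simpa [add_comm] using hper.nat_mul m r
  have : (q : ℂ) ≠ 0 := by exact_mod_cast hq.ne'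
  rw [hg]
  push_cast
  field_simp
  ring

theorem periodic_series_converges_iff (q : ℕ) (hq : 0 < q) (g : ℤ → ℂ)
    (hper : ∀ n : ℤ, g (n + q) = g n) :
    ((∃ L : ℂ, Tendsto (fun N : ℕ => ∑ n ∈ Finset.Icc 1 N, g n / n) atTop (𝓝 L)) ↔
      ∑ r ∈ Finset.Icc 1 q, g r = 0) ∧
    (∑ r ∈ Finset.Icc 1 q, g r = 0 →
      Tendsto (fun N : ℕ => ∑ n ∈ Finset.Icc 1 N, g n / n) atTop
        (𝓝 (-(1 / (q : ℂ)) * ∑ r ∈ Finset.Icc 1 q, g r * (digamma ((r : ℝ) / q) : ℂ)))) := by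
  set S := ∑ r ∈ Icc 1 q, g r
  set E : ℕ → ℂ := fun N =>
    ∑ r ∈ Icc 1 q, g r * ((log N : ℂ) - ∑ m ∈ range N, 1 / ((r : ℂ) / q + m))
  have hE : Tendsto E atTop (𝓝 (∑ r ∈ Icc 1 q, g r * (digamma ((r : ℝ) / q) : ℂ))) := by
    refine tendsto_finsetSum _ fun r hr => Tendsto.const_mul _ ?_
    have hr : 0 < (r : ℝ) / q := by have := (mem_Icc.1 hr).1; positivity
    simpa using tendsto_ofReal_log_sub_sum_one_div_add hr
  have hblock (N : ℕ) : ∑ n ∈ Icc 1 (N * q), g n / n = 1 / q * ((log N : ℂ) * S - E N) := by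
    rw [Function.Periodic.sum_Icc_mul_div_natCast hq hper, mul_sum (Icc 1 q) _ (log N : ℂ),
      ← sum_sub_distrib]
    exact congrArg _ (sum_congr rfl fun r _ => by ring)
  have hconv (hS : S = 0) : Tendsto (fun N : ℕ => ∑ n ∈ Icc 1 N, g n / n) atTop
      (𝓝 (-(1 / (q : ℂ)) * ∑ r ∈ Icc 1 q, g r * (digamma ((r : ℝ) / q) : ℂ))) := by
    refine tendsto_of_tendsto_comp_mul_of_tendsto_sub hq
      (by simpa [hblock, hS] using hE.const_mul (-(1 / (q : ℂ)))) ?_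
    refine ((tendsto_add_atTop_iff_nat 1).2
      (Function.Periodic.tendsto_div_natCast hper (by exact_mod_cast hq))).congr fun n => ?_
    rw [sum_Icc_succ_top (by omega), add_sub_cancel_left]
  refine ⟨⟨fun ⟨L, hL⟩ => ?_, fun hS => ⟨_, hconv hS⟩⟩, hconv⟩
  have hmul : Tendsto (fun N : ℕ => N * q) atTop atTop :=
    tendsto_atTop_mono (fun N => Nat.le_mul_of_pos_right _ hq) tendsto_id
  refine eq_zero_of_tendsto_log_mul
    ((((hL.comp hmul).const_mul (q : ℂ)).add hE).congr fun N => ?_)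
  have hq' : (q : ℂ) ≠ 0 := by exact_mod_cast hq.ne'
  simp only [Function.comp_apply, hblock]
  field_simp
  ring
end

section
/- The multiplicative autocorrelation of the fractional-part function at 1 satisfies A(1) := ∫_0^∞ {t}² t^{-2} dt = log(2π) − γ. -/
/-!
On `[n, n + 1]` the integrand is `(t - n)² / t²`, with the elementary antiderivative
`t - 2n log t - n² / t`. Summing these pieces and telescoping gives
`∫₀ᴺ {t}² / t² dt = 2N - H_N - 2N log N + 2 log N!`. By Stirling's formula
`2 log N! = 2N log N - 2N + log N + log (2π) + o(1)`, so the partial integrals equal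
`log (2π) - (H_N - log N) + o(1)`, which tends to `log (2π) - γ`.
-/

open MeasureTheory Real Filter Set intervalIntegral Topology Interval

section FloorField

variable {R : Type*} [Field R] [LinearOrder R] [IsStrictOrderedRing R] [FloorRing R]

lemma Int.fract_le_self_of_nonneg {t : R} (ht : 0 ≤ t) : Int.fract t ≤ t := by
  have : (0 : R) ≤ ⌊t⌋ := by exact_mod_cast Int.floor_nonneg.2 ht
  linarith [Int.self_sub_fract t]

lemma fract_sq_div_sq_le_one {t : R} (ht : 0 ≤ t) : Int.fract t ^ 2 / t ^ 2 ≤ 1 :=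
  div_le_one_of_le₀ (pow_le_pow_left₀ (Int.fract_nonneg t) (Int.fract_le_self_of_nonneg ht) 2)
    (sq_nonneg t)

end FloorField

lemma intervalIntegrable_fract_sq_div_sq {a b : ℝ} (ha : 0 ≤ a) (hb : 0 ≤ b) :
    IntervalIntegrable (fun t => Int.fract t ^ 2 / t ^ 2) volume a b := by
  rw [intervalIntegrable_iff]
  refine Measure.integrableOn_of_bounded (M := 1) (by simp)
    ((measurable_fract.pow_const 2).div (measurable_id.pow_const 2)).aestronglyMeasurable ?_
  filter_upwards [ae_restrict_mem measurableSet_uIoc] with t ht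
  have ht0 : 0 ≤ t := (le_min ha hb).trans ht.1.le
  rw [norm_of_nonneg (by positivity)]
  exact fract_sq_div_sq_le_one ht0

lemma ae_fract_eq_sub_of_mem_uIoc (m : ℤ) :
    ∀ᵐ t : ℝ, t ∈ Ι (m : ℝ) (m + 1) → Int.fract t = t - m := by
  filter_upwards [Measure.ae_ne volume ((m : ℝ) + 1)] with t hne ht
  rw [uIoc_of_le (by linarith)] at ht
  exact Int.fract_eq_iff.2 ⟨by linarith [ht.1], by linarith [lt_of_le_of_ne ht.2 hne], m, by ring⟩

lemma integral_sub_sq_div_sq {a : ℝ} (ha : 0 < a) :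
    ∫ t in a..a + 1, (t - a) ^ 2 / t ^ 2 = 1 - 2 * a * (log (a + 1) - log a) + a / (a + 1) := by
  have hpos : ∀ t ∈ uIcc a (a + 1), 0 < t := fun t ht =>
    ha.trans_le (by rw [uIcc_of_le (by linarith)] at ht; exact ht.1)
  have hderiv : ∀ t ∈ uIcc a (a + 1),
      HasDerivAt (fun t => t - 2 * a * log t - a ^ 2 / t) ((t - a) ^ 2 / t ^ 2) t := by
    intro t ht
    have ht0 := (hpos t ht).ne'
    refine (((hasDerivAt_id' t).sub ((hasDerivAt_log ht0).const_mul (2 * a))).sub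
      ((hasDerivAt_const t (a ^ 2)).div (hasDerivAt_id' t) ht0)).congr_deriv ?_
    field_simp
    ring
  have hcont : ContinuousOn (fun t => (t - a) ^ 2 / t ^ 2) (uIcc a (a + 1)) :=
    ContinuousOn.div (by fun_prop) (by fun_prop) fun t ht => (pow_pos (hpos t ht) 2).ne'
  rw [integral_eq_sub_of_hasDerivAt hderiv hcont.intervalIntegrable]
  field_simp
  ring

lemma integral_fract_sq_div_sq_natCast_add_one (n : ℕ) :
    ∫ t in (n : ℝ)..n + 1, Int.fract t ^ 2 / t ^ 2 =
      1 - 2 * n * (log (n + 1) - log n) + n / (n + 1) := by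
  have hfract : ∫ t in (n : ℝ)..n + 1, Int.fract t ^ 2 / t ^ 2 =
      ∫ t in (n : ℝ)..n + 1, (t - n) ^ 2 / t ^ 2 :=
    integral_congr_ae <| (ae_fract_eq_sub_of_mem_uIoc n).mono fun t h ht => by
      rw [h (by exact_mod_cast ht), Int.cast_natCast]
  rw [hfract]
  rcases n.eq_zero_or_pos with rfl | hn
  · have hone : ∫ t in (0 : ℝ)..1, t ^ 2 / t ^ 2 = ∫ _ in (0 : ℝ)..1, (1 : ℝ) :=
      integral_congr_ae <| ae_of_all _ fun t ht => div_self (pow_pos (by simpa using ht.1) 2).ne'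
    simpa using hone
  · exact integral_sub_sq_div_sq (by positivity)

lemma integral_fract_sq_div_sq_zero_natCast (N : ℕ) :
    ∫ t in (0 : ℝ)..N, Int.fract t ^ 2 / t ^ 2 =
      2 * N - harmonic N - 2 * N * log N + 2 * log N.factorial := by
  induction N with
  | zero => simp
  | succ N ih =>
    have hN : (0 : ℝ) ≤ N := N.cast_nonneg
    rw [Nat.cast_succ, ← integral_add_adjacent_intervals
      (intervalIntegrable_fract_sq_div_sq le_rfl hN)
      (intervalIntegrable_fract_sq_div_sq hN (by positivity)),
      ih, integral_fract_sq_div_sq_natCast_add_one, harmonic_succ, Nat.factorial_succ, Nat.cast_mul,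
      log_mul (by positivity) (by positivity)]
    push_cast
    field_simp
    ring

lemma two_mul_log_factorial_sub_eq (N : ℕ) (hN : N ≠ 0) :
    2 * N - harmonic N - 2 * N * log N + 2 * log N.factorial =
      2 * log (Stirling.stirlingSeq N) + log 2 - (harmonic N - log N) := by
  have hN0 : (N : ℝ) ≠ 0 := by exact_mod_cast hN
  rw [Stirling.log_stirlingSeq_formula, log_mul two_ne_zero hN0, log_div hN0 (exp_ne_zero 1),
    log_exp]
  ring

lemma tendsto_two_mul_log_factorial_sub :
    Tendsto (fun N : ℕ => 2 * N - harmonic N - 2 * N * log N + 2 * log N.factorial) atTop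
      (𝓝 (log (2 * π) - eulerMascheroniConstant)) := by
  have hstirling : Tendsto (fun N => 2 * log (Stirling.stirlingSeq N)) atTop (𝓝 (log π)) := by
    have h := (Stirling.tendsto_stirlingSeq_sqrt_pi.log (sqrt_pos.2 pi_pos).ne').const_mul 2
    rwa [log_sqrt pi_pos.le, mul_div_cancel₀ _ two_ne_zero] at h
  have hlim := (hstirling.add_const (log 2)).sub tendsto_harmonic_sub_log
  rw [log_mul two_ne_zero pi_pos.ne', add_comm (log 2)]
  exact hlim.congr' <| (eventually_ne_atTop 0).mono fun N hN =>
    (two_mul_log_factorial_sub_eq N hN).symm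

theorem autocorrelation_at_one :
    ∫ t in Set.Ioi (0 : ℝ), Int.fract t ^ 2 / t ^ 2 =
      Real.log (2 * Real.pi) - Real.eulerMascheroniConstant := by
  have hpartial : Tendsto (fun N : ℕ => ∫ t in (0 : ℝ)..N, Int.fract t ^ 2 / t ^ 2) atTop
      (𝓝 (log (2 * π) - eulerMascheroniConstant)) := by
    simpa only [integral_fract_sq_div_sq_zero_natCast] using tendsto_two_mul_log_factorial_sub
  have hintegrable : IntegrableOn (fun t : ℝ => Int.fract t ^ 2 / t ^ 2) (Ioi 0) := by
    exact integrableOn_Ioi_of_intervalIntegral_norm_tendsto _ 0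
      (fun N => (intervalIntegrable_fract_sq_div_sq le_rfl N.cast_nonneg).1)
      tendsto_natCast_atTop_atTop
      (hpartial.congr fun N => integral_congr fun t _ => (norm_of_nonneg (by positivity)).symm)
  exact tendsto_nhds_unique
    (intervalIntegral_tendsto_integral_Ioi 0 hintegrable tendsto_natCast_atTop_atTop) hpartial
end
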